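/- For every α ∈ ℂ and every nonzero β ∈ ℂ, the compatible Lie algebra structure L₁₀^α on ℂ⁴, given by [e₁,e₂]=e₃, [e₂,e₃]=e₄, {e₁,e₂}=α e₃, {e₁,e₃}=e₄, degenerates to the structure L₀₉^{α,β} given by [e₁,e₂]=e₃, [e₂,e₃]=e₄, {e₁,e₂}=α e₃, {e₂,e₃}=β e₄. -/

import Mathlib

open Filter Matrix Topology

/-- ℂ⁴ -/
abbrev V4 : Type := Fin 4 → ℂ

/-- GL₄(ℂ) -/
abbrev GL4 := Matrix.GeneralLinearGroup (Fin 4) ℂ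

/-- structure constants of a bilinear map on ℂ⁴: `μ i j` is the value on `(eᵢ, eⱼ)`. -/
abbrev Bil4 := Fin 4 → Fin 4 → V4

/-- standard basis vectors -/
noncomputable def e4 (k : Fin 4) : V4 := Pi.single k (1 : ℂ)

/-- action of `g ∈ GL₄(ℂ)` on a bilinear map: `(g·μ)(x,y) = g μ(g⁻¹x, g⁻¹y)`,
in structure constants. -/
noncomputable def actBil (g : GL4) (μ : Bil4) : Bil4 := fun i j =>
  (g : Matrix (Fin 4) (Fin 4) ℂ).mulVec
    (∑ p, ∑ q,
      (((g⁻¹ : GL4) : Matrix (Fin 4) (Fin 4) ℂ) p i *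
       ((g⁻¹ : GL4) : Matrix (Fin 4) (Fin 4) ℂ) q j) • μ p q)

/-- the pair `(μ, ν)` of bilinear maps on ℂ⁴ degenerates to the pair `(lam, rho)`. -/
def DegeneratesPair (μ ν lam rho : Bil4) : Prop :=
  ∃ g : ℂ → GL4,
    Tendsto (fun t => actBil (g t) μ) (𝓝[≠] (0 : ℂ)) (𝓝 lam) ∧
    Tendsto (fun t => actBil (g t) ν) (𝓝[≠] (0 : ℂ)) (𝓝 rho)

noncomputable def μL10 : Bil4 := fun i j =>
  if i = (0 : Fin 4) ∧ j = (1 : Fin 4) then e4 2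
  else if i = (1 : Fin 4) ∧ j = (0 : Fin 4) then -(e4 2)
  else if i = (1 : Fin 4) ∧ j = (2 : Fin 4) then e4 3
  else if i = (2 : Fin 4) ∧ j = (1 : Fin 4) then -(e4 3)
  else 0

noncomputable def νL10 (α : ℂ) : Bil4 := fun i j =>
  if i = (0 : Fin 4) ∧ j = (1 : Fin 4) then α • e4 2
  else if i = (1 : Fin 4) ∧ j = (0 : Fin 4) then -(α • e4 2)
  else if i = (0 : Fin 4) ∧ j = (2 : Fin 4) then e4 3
  else if i = (2 : Fin 4) ∧ j = (0 : Fin 4) then -(e4 3)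
  else 0

noncomputable def μL09 : Bil4 := fun i j =>
  if i = (0 : Fin 4) ∧ j = (1 : Fin 4) then e4 2
  else if i = (1 : Fin 4) ∧ j = (0 : Fin 4) then -(e4 2)
  else if i = (1 : Fin 4) ∧ j = (2 : Fin 4) then e4 3
  else if i = (2 : Fin 4) ∧ j = (1 : Fin 4) then -(e4 3)
  else 0

noncomputable def νL09 (α β : ℂ) : Bil4 := fun i j =>
  if i = (0 : Fin 4) ∧ j = (1 : Fin 4) then α • e4 2
  else if i = (1 : Fin 4) ∧ j = (0 : Fin 4) then -(α • e4 2)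
  else if i = (1 : Fin 4) ∧ j = (2 : Fin 4) then β • e4 3
  else if i = (2 : Fin 4) ∧ j = (1 : Fin 4) then -(β • e4 3)
  else 0

/-! In the basis `f₁ = t e₁, f₂ = β e₁ + e₂, f₃ = t e₃, f₄ = t e₄` the products of `L₁₀^α` read
`[f₁,f₂] = f₃, [f₂,f₃] = f₄, {f₁,f₂} = α f₃, {f₂,f₃} = β f₄, {f₁,f₃} = t f₄`,
so they are those of `L₀₉^{α,β}` up to a term that vanishes as `t → 0`. -/

noncomputable def νE13 : Bil4 := fun i j =>
  if i = (0 : Fin 4) ∧ j = (2 : Fin 4) then e4 3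
  else if i = (2 : Fin 4) ∧ j = (0 : Fin 4) then -(e4 3)
  else 0

/-- `g⁻¹ · μ` lists the structure constants of `μ` in the basis formed by the columns of `g`. -/
theorem actBil_inv_eq_iff (g : GL4) (μ lam : Bil4) :
    actBil g⁻¹ μ = lam ↔
      ∀ i j, (g : Matrix (Fin 4) (Fin 4) ℂ) *ᵥ lam i j =
        ∑ p, ∑ q, ((g : Matrix (Fin 4) (Fin 4) ℂ) p i * (g : Matrix (Fin 4) (Fin 4) ℂ) q j) • μ p q := by
  have hinv : ((g⁻¹ : GL4) : Matrix (Fin 4) (Fin 4) ℂ) * g = 1 := by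
    rw [← Units.val_mul, inv_mul_cancel, Units.val_one]
  unfold actBil
  rw [inv_inv]
  constructor
  · rintro rfl i j
    rw [mulVec_mulVec, ← Units.val_mul, mul_inv_cancel, Units.val_one, one_mulVec]
  · intro h
    ext i j : 2
    rw [← h, mulVec_mulVec, hinv, one_mulVec]

theorem tendsto_add_smul_nhdsNE {𝕜 E : Type*} [NontriviallyNormedField 𝕜] [AddCommGroup E]
    [Module 𝕜 E] [TopologicalSpace E] [ContinuousAdd E] [ContinuousSMul 𝕜 E] (a d : E) :
    Tendsto (fun t : 𝕜 => a + t • d) (𝓝[≠] 0) (𝓝 a) := by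
  have h : Continuous fun t : 𝕜 => a + t • d := by fun_prop
  simpa using (h.tendsto 0).mono_left nhdsWithin_le_nhds

def basisChange (β t : ℂ) : Matrix (Fin 4) (Fin 4) ℂ :=
  !![t, β, 0, 0; 0, 1, 0, 0; 0, 0, t, 0; 0, 0, 0, t]

theorem det_basisChange (β t : ℂ) : (basisChange β t).det = t ^ 3 := by
  simp [basisChange, det_succ_row_zero, Fin.sum_univ_succ]
  ring

noncomputable def degenerationPath (β t : ℂ) : GL4 :=
  if ht : t = 0 then 1
  else (GeneralLinearGroup.mkOfDetNeZero (basisChange β t) (by simpa [det_basisChange]))⁻¹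

theorem actBil_degenerationPath_eq_iff {β t : ℂ} (ht : t ≠ 0) (μ lam : Bil4) :
    actBil (degenerationPath β t) μ = lam ↔
      ∀ i j, basisChange β t *ᵥ lam i j =
        ∑ p, ∑ q, (basisChange β t p i * basisChange β t q j) • μ p q := by
  rw [degenerationPath, dif_neg ht, actBil_inv_eq_iff]
  rfl

theorem actBil_degenerationPath_μL10 (β : ℂ) {t : ℂ} (ht : t ≠ 0) :
    actBil (degenerationPath β t) μL10 = μL09 := by
  rw [actBil_degenerationPath_eq_iff ht]
  intro i j
  ext k
  fin_cases i <;> fin_cases j <;> fin_cases k <;>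
    simp [basisChange, μL10, μL09, e4, Fin.sum_univ_four, mulVec, dotProduct, Pi.single_apply]

theorem actBil_degenerationPath_νL10 (α β : ℂ) {t : ℂ} (ht : t ≠ 0) :
    actBil (degenerationPath β t) (νL10 α) = νL09 α β + t • νE13 := by
  rw [actBil_degenerationPath_eq_iff ht]
  intro i j
  ext k
  fin_cases i <;> fin_cases j <;> fin_cases k <;>
    simp [basisChange, νL10, νL09, νE13, e4, Fin.sum_univ_four, mulVec, dotProduct, Pi.single_apply,
      mul_comm]

/-- for every α and every nonzero β, L₁₀^α degenerates to L₀₉^{α,β}. -/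
theorem stmt19 : ∀ α β : ℂ, β ≠ 0 →
    DegeneratesPair μL10 (νL10 α) μL09 (νL09 α β) := by
  intro α β _
  refine ⟨degenerationPath β, ?_, ?_⟩
  · exact tendsto_const_nhds.congr' <| eventually_nhdsWithin_of_forall fun t ht =>
      (actBil_degenerationPath_μL10 β ht).symm
  · exact (tendsto_add_smul_nhdsNE _ _).congr' <| eventually_nhdsWithin_of_forall fun t ht =>
      (actBil_degenerationPath_νL10 α β ht).symm
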